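/- arXiv:2002.00421 — 5 statements merged into one kernel-verified Lean document; each statement's English description precedes it below -/
import Mathlib

section
/- Let t > 0 and define f(s) = |t/(2t+s) - 3t/(5t+s)| + |t/(2t+s) - 2t/(5t+s)| for s ≥ 0. Then on the interval [0, 2t], f attains its minimum value uniquely at s = t. -/
/-!
Write `x = t/(2t+s)`, `y = 3t/(5t+s)`, `z = 2t/(5t+s)`. Since `|x - y| + |x - z|` dominates both
`y - z = t/(5t+s)` and `y + z - 2x = 3ts/((2t+s)(5t+s))`, it suffices to see that the first exceeds
`1/6` for `s < t` and the second for `t < s < 10t`; the latter amounts to `(s - t)(10t - s) > 0`.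
At `s = t` the value is exactly `1/6`.
-/

noncomputable def mnlDisagreement (t s : ℝ) : ℝ :=
  |t / (2*t + s) - 3*t / (5*t + s)| + |t / (2*t + s) - 2*t / (5*t + s)|

lemma mnlDisagreement_self {t : ℝ} (ht : t ≠ 0) : mnlDisagreement t t = 1 / 6 := by
  have hx : t / (2*t + t) = 1 / 3 := by field_simp; ring
  have hy : 3*t / (5*t + t) = 1 / 2 := by field_simp; ring
  have hz : 2*t / (5*t + t) = 1 / 3 := by field_simp; ring
  rw [mnlDisagreement, hx, hy, hz]
  norm_num [abs_of_neg]

lemma sub_le_mnlDisagreement (t s : ℝ) :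
    3*t / (5*t + s) - 2*t / (5*t + s) ≤ mnlDisagreement t s := by
  unfold mnlDisagreement
  linarith [neg_abs_le (t / (2*t + s) - 3*t / (5*t + s)),
    le_abs_self (t / (2*t + s) - 2*t / (5*t + s))]

lemma add_sub_two_mul_le_mnlDisagreement (t s : ℝ) :
    3*t / (5*t + s) + 2*t / (5*t + s) - 2 * (t / (2*t + s)) ≤ mnlDisagreement t s := by
  unfold mnlDisagreement
  linarith [neg_abs_le (t / (2*t + s) - 3*t / (5*t + s)),
    neg_abs_le (t / (2*t + s) - 2*t / (5*t + s))]

lemma one_sixth_lt_mnlDisagreement_of_lt {t s : ℝ} (hpos : 0 < 5*t + s) (hst : s < t) :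
    1 / 6 < mnlDisagreement t s := by
  refine lt_of_lt_of_le ?_ (sub_le_mnlDisagreement t s)
  rw [← sub_div, lt_div_iff₀ hpos]
  linarith

lemma one_sixth_lt_mnlDisagreement_of_gt {t s : ℝ} (hts : t < s) (hs : s < 10*t) :
    1 / 6 < mnlDisagreement t s := by
  have h2 : 0 < 2*t + s := by linarith
  have h5 : 0 < 5*t + s := by linarith
  refine lt_of_lt_of_le ?_ (add_sub_two_mul_le_mnlDisagreement t s)
  have hval : 3*t / (5*t + s) + 2*t / (5*t + s) - 2 * (t / (2*t + s))
      = 3*t*s / ((2*t + s) * (5*t + s)) := by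
    have h55 : 0 < (5*t + s) * (5*t + s) := mul_pos h5 h5
    rw [div_add_div _ _ h5.ne' h5.ne', mul_div_assoc', div_sub_div _ _ h55.ne' h2.ne',
      div_eq_div_iff (mul_pos h55 h2).ne' (mul_pos h2 h5).ne']
    ring
  rw [hval, lt_div_iff₀ (mul_pos h2 h5)]
  nlinarith [mul_pos (sub_pos.2 hts) (sub_pos.2 hs)]

theorem mnl_agreement_min_at_t (t : ℝ) (ht : 0 < t)
    (f : ℝ → ℝ)
    (hf : ∀ s, f s = |t / (2*t + s) - 3*t / (5*t + s)| + |t / (2*t + s) - 2*t / (5*t + s)|) :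
    ∀ s, 0 ≤ s → s ≤ 2*t → (f t ≤ f s ∧ (f s = f t → s = t)) := by
  intro s hs0 hs2
  rcases eq_or_ne s t with rfl | hne
  · exact ⟨le_rfl, fun _ => rfl⟩
  have hft : f t = 1 / 6 := (hf t).trans (mnlDisagreement_self ht.ne')
  have hlt : f t < f s := by
    rw [hft, hf s]
    rcases hne.lt_or_gt with hst | hts
    · exact one_sixth_lt_mnlDisagreement_of_lt (by linarith) hst
    · exact one_sixth_lt_mnlDisagreement_of_gt hts (by linarith)
  exact ⟨hlt.le, fun heq => absurd heq hlt.ne'⟩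
end

section
/- Let c, t, e, β be positive reals with e ≤ c. Then e/(c + t/(1+β)) − e/(c + t) < β/2. -/
/-! The difference equals `e t β / ((c (1 + β) + t) (c + t))`; replacing `e` by `c` and
`c (1 + β) + t` by `c + t` bounds it by `β · c t / (c + t)²`, and AM–GM gives `c t / (c + t)² ≤ 1/4`. -/

theorem div_add_div_one_add_sub_div_add_eq {K : Type*} [Field K] (e c t β : K)
    (hβ : 1 + β ≠ 0) (hcβt : c * (1 + β) + t ≠ 0) (hct : c + t ≠ 0) :
    e / (c + t / (1 + β)) - e / (c + t) = e * t * β / ((c * (1 + β) + t) * (c + t)) := by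
  rw [show c + t / (1 + β) = (c * (1 + β) + t) / (1 + β) by field_simp]
  field_simp
  ring

theorem mul_div_add_sq_le_one_fourth {K : Type*} [Field K] [LinearOrder K] [IsStrictOrderedRing K]
    (a b : K) : a * b / (a + b) ^ 2 ≤ 1 / 4 :=
  div_le_of_le_mul₀ (sq_nonneg _) (by norm_num) (by linarith [sq_nonneg (a - b)])

theorem mnl_upper_error_bound_general (c t e β : ℝ) (hc : 0 < c) (ht : 0 < t)
    (hβ : 0 < β) (hec : e ≤ c) :
    e / (c + t / (1 + β)) - e / (c + t) < β / 2 := by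
  have hct : 0 < c + t := by positivity
  have hcβt : 0 < c * (1 + β) + t := by positivity
  rw [div_add_div_one_add_sub_div_add_eq e c t β (by positivity) hcβt.ne' hct.ne']
  calc e * t * β / ((c * (1 + β) + t) * (c + t))
      ≤ c * t * β / ((c * (1 + β) + t) * (c + t)) := by gcongr
    _ < c * t * β / ((c + t) * (c + t)) := by gcongr; nlinarith
    _ = β * (c * t / (c + t) ^ 2) := by ring
    _ ≤ β * (1 / 4) := mul_le_mul_of_nonneg_left (mul_div_add_sq_le_one_fourth c t) hβ.le
    _ < β / 2 := by linarith

theorem mnl_upper_error_bound (c t e β : ℝ) (hc : 0 < c) (ht : 0 < t) (he : 0 < e)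
    (hβ : 0 < β) (hec : e ≤ c) :
    e / (c + t / (1 + β)) - e / (c + t) < β / 2 :=
  mnl_upper_error_bound_general c t e β hc ht hβ hec
end

section
/- In the EBA model where each item x has a single unique aspect χ_x with utility u(χ_x) = e^{v(x)} for a utility function v, the choice probability from any finite choice set C with |C| ≥ 2 equals the MNL probability: P(x | C) = e^{v(x)} / ∑_{y∈C} e^{v(y)}. -/
/-!
With singleton aspects `{χ x}` and `χ` injective, a choice set with two items has no aspect
common to all of them, so the EBA recursion is in its nontrivial case; eliminating by `χ x`
leaves `{x}` alone, where the choice probability is `1`, and the recursion becomes softmax.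
-/

namespace Finset

variable {U A : Type*} [DecidableEq A] {χ : U → A}

theorem filter_forall_mem_singleton_eq_empty (hχ : Function.Injective χ) {D : Finset U}
    (hD : D.Nontrivial) (s : Finset A) :
    s.filter (fun a => ∀ y ∈ D, a ∈ ({χ y} : Finset A)) = ∅ := by
  refine filter_false_of_mem fun a _ ha => ?_
  obtain ⟨y, hy, z, hz, hyz⟩ := hD
  exact hyz <| hχ <| (mem_singleton.mp (ha y hy)).symm.trans (mem_singleton.mp (ha z hz))

theorem filter_mem_singleton_apply_eq_singleton (hχ : Function.Injective χ) {D : Finset U}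
    {x : U} (hx : x ∈ D) : D.filter (fun y => χ x ∈ ({χ y} : Finset A)) = {x} := by
  ext z
  simp only [mem_filter, mem_singleton, hχ.eq_iff]
  exact ⟨fun h => h.2.symm, fun h => ⟨h ▸ hx, h.symm⟩⟩

end Finset

open Finset

open Classical in
theorem eba_singleton_aspects_is_mnl_general
    {U A : Type*} [DecidableEq A]
    (asp : U → Finset A)     -- aspect set of each item
    (u : A → ℝ)              -- aspect utilities
    (P : U → Finset U → ℝ)   -- EBA choice probabilities
    -- the EBA recursion, eq. (3): nontrivial case
    (hrec : ∀ (D : Finset U) (x : U), x ∈ D →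
      D.sup asp ≠ (D.sup asp).filter (fun χ => ∀ y ∈ D, χ ∈ asp y) →
      P x D =
        (∑ χ ∈ asp x \ (D.sup asp).filter (fun χ => ∀ y ∈ D, χ ∈ asp y),
            u χ * P x (D.filter (fun y => χ ∈ asp y))) /
        ∑ ψ ∈ D.sup asp \ (D.sup asp).filter (fun χ => ∀ y ∈ D, χ ∈ asp y), u ψ)
    -- the EBA recursion: degenerate (uniform) case
    (huni : ∀ (D : Finset U) (x : U), x ∈ D →
      D.sup asp = (D.sup asp).filter (fun χ => ∀ y ∈ D, χ ∈ asp y) →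
      P x D = 1 / D.card)
    -- each item has a single unique aspect with exp-utility given by `v`
    (χ : U → A) (hχ : Function.Injective χ)
    (hasp : ∀ x, asp x = {χ x})
    (v : U → ℝ) (hu : ∀ x, u (χ x) = Real.exp (v x)) :
    ∀ (C : Finset U), 2 ≤ C.card → ∀ x ∈ C,
      P x C = Real.exp (v x) / ∑ y ∈ C, Real.exp (v y) := by
  intro C hC x hx
  obtain rfl : asp = fun y => {χ y} := funext hasp
  simp only [sup_singleton_apply] at hrec huni
  replace hC : C.Nontrivial := one_lt_card_iff_nontrivial.mp hC
  have hnoncommon := filter_forall_mem_singleton_eq_empty hχ hC (C.image χ)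
  have hsingle : P x {x} = 1 := by simpa using huni {x} x (mem_singleton_self x) (by ext; simp)
  rw [hrec C x hx (hnoncommon ▸ (hC.nonempty.image χ).ne_empty), hnoncommon, sdiff_empty,
    sdiff_empty, sum_singleton, filter_mem_singleton_apply_eq_singleton hχ hx, hsingle, mul_one,
    hu, sum_image hχ.injOn]
  simp only [hu]

open Classical in
/-- In the EBA model where every item `x` has a single unique aspect `χ x` with
utility `exp (v x)`, the choice probability from any choice set of size ≥ 2
is the MNL (softmax) probability.  The EBA model is given abstractly by a
probability function `P` satisfying the EBA recursion. -/
theorem eba_singleton_aspects_is_mnl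
    {U A : Type*} [DecidableEq U] [DecidableEq A]
    (asp : U → Finset A)     -- aspect set of each item
    (u : A → ℝ)              -- aspect utilities
    (P : U → Finset U → ℝ)   -- EBA choice probabilities
    -- the EBA recursion, eq. (3): nontrivial case
    (hrec : ∀ (D : Finset U) (x : U), x ∈ D →
      D.sup asp ≠ (D.sup asp).filter (fun χ => ∀ y ∈ D, χ ∈ asp y) →
      P x D =
        (∑ χ ∈ asp x \ (D.sup asp).filter (fun χ => ∀ y ∈ D, χ ∈ asp y),
            u χ * P x (D.filter (fun y => χ ∈ asp y))) /
        ∑ ψ ∈ D.sup asp \ (D.sup asp).filter (fun χ => ∀ y ∈ D, χ ∈ asp y), u ψ)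
    -- the EBA recursion: degenerate (uniform) case
    (huni : ∀ (D : Finset U) (x : U), x ∈ D →
      D.sup asp = (D.sup asp).filter (fun χ => ∀ y ∈ D, χ ∈ asp y) →
      P x D = 1 / D.card)
    -- each item has a single unique aspect with exp-utility given by `v`
    (χ : U → A) (hχ : Function.Injective χ)
    (hasp : ∀ x, asp x = {χ x})
    (v : U → ℝ) (hu : ∀ x, u (χ x) = Real.exp (v x)) :
    ∀ (C : Finset U), 2 ≤ C.card → ∀ x ∈ C,
      P x C = Real.exp (v x) / ∑ y ∈ C, Real.exp (v y) :=
  eba_singleton_aspects_is_mnl_general asp u P hrec huni χ hχ hasp v hu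
end

section
/- Let t > 0 and s ≥ 0 be reals. Define D(s) = |t/(2t+s) − 3t/(5t+s)| + |t/(2t+s) − 2t/(5t+s)|. Then for s ∈ [0, 2t], D(s) ≥ D(t), with equality only at s = t; moreover D(t) = |1/3 − 1/2| + |1/3 − 1/3| = 1/6. -/
theorem mnl_agreement_min_value (t : ℝ) (ht : 0 < t)
    (D : ℝ → ℝ)
    (hD : ∀ s, D s = |t / (2*t + s) - 3*t / (5*t + s)| + |t / (2*t + s) - 2*t / (5*t + s)|) :
    (∀ s ∈ Set.Icc 0 (2*t), D t ≤ D s ∧ (D s = D t → s = t)) ∧ D t = 1/6 := by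
  have key : ∀ s, 0 ≤ s → D s = (t*(t+2*s) + t*|t - s|) / ((2*t+s)*(5*t+s)) := by
    intro s hs
    have ha : 0 < 2*t + s := by linarith
    have hb : 0 < 5*t + s := by linarith
    rw [hD, add_div]
    congr 1
    · rw [div_sub_div _ _ ha.ne' hb.ne', abs_div, abs_of_pos (mul_pos ha hb)]
      congr 1
      have h1 : t * (5*t+s) - (2*t+s)*(3*t) = -(t*(t+2*s)) := by ring
      rw [h1, abs_neg, abs_of_nonneg (by positivity)]
    · rw [div_sub_div _ _ ha.ne' hb.ne', abs_div, abs_of_pos (mul_pos ha hb)]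
      congr 1
      have h1 : t * (5*t+s) - (2*t+s)*(2*t) = t*(t-s) := by ring
      rw [h1, abs_mul, abs_of_pos ht]
  have hDt : D t = 1/6 := by
    rw [key t ht.le, sub_self, abs_zero]
    field_simp
    ring
  refine ⟨?_, hDt⟩
  intro s hs
  obtain ⟨hs0, hs2⟩ := hs
  have ha : 0 < 2*t + s := by linarith
  have hb : 0 < 5*t + s := by linarith
  have hab : 0 < (2*t+s)*(5*t+s) := mul_pos ha hb
  rw [hDt, key s hs0]
  rcases le_total s t with hst | hts
  · rw [abs_of_nonneg (by linarith : (0:ℝ) ≤ t - s)]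
    constructor
    · rw [le_div_iff₀ hab]
      nlinarith [mul_nonneg ha.le (by linarith : (0:ℝ) ≤ t - s)]
    · intro h
      rw [div_eq_iff hab.ne'] at h
      nlinarith [mul_pos ha (ht.trans_le (le_refl t))]
  · rw [abs_of_nonpos (by linarith : t - s ≤ 0)]
    constructor
    · rw [le_div_iff₀ hab]
      nlinarith [mul_nonneg (by linarith : (0:ℝ) ≤ s - t) (by linarith : (0:ℝ) ≤ 10*t - s)]
    · intro h
      rw [div_eq_iff hab.ne'] at h
      nlinarith [sq_nonneg (s - t)]
end

section
/- In the nested logit model with a fixed tree, let x* be a leaf with root-to-leaf path v₁,…,v_ℓ = x*. Adding a new leaf z to the tree leaves the choice probability of x* relative to any sibling-subtree of x*'s ancestors unchanged unless z is attached as a child of some node on the path v₁,…,v_{ℓ−1} (i.e., z becomes a sibling of an ancestor of x* or of x* itself); concretely, if z is attached strictly inside a subtree rooted at a node not on x*'s path, then P(x* | C ∪ {z}) / P(y | C ∪ {z}) ≥ P(x* | C) / P(y | C) for every y ∈ C with y ≠ x* lying outside that subtree. -/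
open Finset

variable {V : Type*} [DecidableEq V]

/-- Nodes of the induced tree `T(C)`: all nodes lying on the root-to-leaf path
of some item of the choice set `C`. -/
def nlActive (pathTo : V → List V) (C : Finset V) : Finset V :=
  C.biUnion (fun x => (pathTo x).toFinset)

/-- Nested-logit choice probability of the leaf `x` given choice set `C`:
the product over the non-root nodes `v` on `x`'s root-to-leaf path of the
softmax probability of `v` among the active nodes sharing `v`'s parent. -/
noncomputable def nlProb (root : V) (par : V → V) (util : V → ℝ)
    (pathTo : V → List V) (C : Finset V) (x : V) : ℝ :=
  ∏ v ∈ (pathTo x).toFinset.erase root,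
    Real.exp (util v) /
      ∑ w ∈ (nlActive pathTo C).filter (fun w => par w = par v), Real.exp (util w)

/-! Adding `z` enlarges the active set only by the nodes of `z`'s path. Those above `s` were
active already, and those strictly below `s` have their parent inside the subtree of `s`, so they
only join sibling groups there. A leaf whose path avoids `s` therefore sees every softmax
denominator on its path unchanged: its choice probability, and hence the ratio, stays the same. -/

section Paths

variable {root : V} {par : V → V} {pathTo : V → List V}

theorem mem_pathTo_self (hroot : pathTo root = [root])
    (hpath : ∀ v, v ≠ root → pathTo v = v :: pathTo (par v)) (x : V) : x ∈ pathTo x := by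
  by_cases hx : x = root
  · simp [hx, hroot]
  · simp [hpath x hx]

theorem pathTo_suffix_of_mem (hroot : pathTo root = [root])
    (hpath : ∀ v, v ≠ root → pathTo v = v :: pathTo (par v)) {x v : V} (hv : v ∈ pathTo x) :
    pathTo v <:+ pathTo x := by
  generalize hl : pathTo x = l at hv ⊢
  induction l generalizing x with
  | nil => simp at hv
  | cons a rest ih =>
    by_cases hx : x = root
    · obtain rfl : v = root := by simpa [← hl, hx, hroot] using hv
      rw [← hl, hx]
    · obtain ⟨rfl, hrest⟩ := List.cons_eq_cons.mp ((hpath x hx).symm.trans hl)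
      rcases List.mem_cons.mp hv with rfl | hv
      · rw [hl]
      · exact (ih hrest hv).trans (List.suffix_cons _ _)

theorem mem_pathTo_trans (hroot : pathTo root = [root])
    (hpath : ∀ v, v ≠ root → pathTo v = v :: pathTo (par v)) {u v x : V}
    (huv : u ∈ pathTo v) (hvx : v ∈ pathTo x) : u ∈ pathTo x :=
  (pathTo_suffix_of_mem hroot hpath hvx).subset huv

theorem par_mem_pathTo (hroot : pathTo root = [root])
    (hpath : ∀ v, v ≠ root → pathTo v = v :: pathTo (par v)) {v : V} (hv : v ≠ root) :
    par v ∈ pathTo v := by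
  rw [hpath v hv]
  exact List.mem_cons_of_mem v (mem_pathTo_self hroot hpath (par v))

end Paths

theorem mem_nlActive_of_mem_pathTo {pathTo : V → List V} {C : Finset V} {c u : V}
    (hc : c ∈ C) (hu : u ∈ pathTo c) : u ∈ nlActive pathTo C :=
  Finset.mem_biUnion.mpr ⟨c, hc, List.mem_toFinset.mpr hu⟩

theorem nlActive_insert (pathTo : V → List V) (C : Finset V) (z : V) :
    nlActive pathTo (insert z C) = (pathTo z).toFinset ∪ nlActive pathTo C :=
  Finset.biUnion_insert

section InsertLeaf

variable {root : V} {par : V → V} {pathTo : V → List V} {C : Finset V} {z s : V}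

theorem mem_nlActive_of_mem_pathTo_of_notMem_pathTo_par (hroot : pathTo root = [root])
    (hpath : ∀ v, v ≠ root → pathTo v = v :: pathTo (par v))
    (hs : s ∈ nlActive pathTo C) (hsz : s ∈ pathTo z) {w : V} (hwz : w ∈ pathTo z)
    (hsw : s ∉ pathTo (par w)) : w ∈ nlActive pathTo C := by
  obtain ⟨c, hc, hsc⟩ := Finset.mem_biUnion.mp hs
  have hsc : s ∈ pathTo c := List.mem_toFinset.mp hsc
  rcases List.suffix_or_suffix_of_suffix (pathTo_suffix_of_mem hroot hpath hwz)
      (pathTo_suffix_of_mem hroot hpath hsz) with hws | hsw'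
  · exact mem_nlActive_of_mem_pathTo hc
      (mem_pathTo_trans hroot hpath (hws.subset (mem_pathTo_self hroot hpath w)) hsc)
  · have hs_w : s ∈ pathTo w := hsw'.subset (mem_pathTo_self hroot hpath s)
    obtain rfl : w = s := by
      by_cases hw : w = root
      · rw [hw, hroot, List.mem_singleton] at hs_w
        rw [hw, hs_w]
      · rw [hpath w hw, List.mem_cons] at hs_w
        exact (hs_w.resolve_right hsw).symm
    exact hs

theorem filter_nlActive_insert_of_notMem_pathTo (hroot : pathTo root = [root])
    (hpath : ∀ v, v ≠ root → pathTo v = v :: pathTo (par v))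
    (hs : s ∈ nlActive pathTo C) (hsz : s ∈ pathTo z) {p : V} (hsp : s ∉ pathTo p) :
    (nlActive pathTo (insert z C)).filter (fun w => par w = p) =
      (nlActive pathTo C).filter (fun w => par w = p) := by
  ext w
  simp only [Finset.mem_filter, nlActive_insert, Finset.mem_union, List.mem_toFinset,
    and_congr_left_iff, or_iff_right_iff_imp]
  rintro rfl hwz
  exact mem_nlActive_of_mem_pathTo_of_notMem_pathTo_par hroot hpath hs hsz hwz hsp

theorem nlProb_insert_of_notMem_pathTo (util : V → ℝ) (hroot : pathTo root = [root])
    (hpath : ∀ v, v ≠ root → pathTo v = v :: pathTo (par v))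
    (hs : s ∈ nlActive pathTo C) (hsz : s ∈ pathTo z) {t : V} (hst : s ∉ pathTo t) :
    nlProb root par util pathTo (insert z C) t = nlProb root par util pathTo C t := by
  refine Finset.prod_congr rfl fun v hv => ?_
  obtain ⟨hv_root, hvt⟩ := Finset.mem_erase.mp hv
  have hs_par : s ∉ pathTo (par v) := fun h => hst <| mem_pathTo_trans hroot hpath
    (mem_pathTo_trans hroot hpath h (par_mem_pathTo hroot hpath hv_root))
    (List.mem_toFinset.mp hvt)
  rw [filter_nlActive_insert_of_notMem_pathTo hroot hpath hs hsz hs_par]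

end InsertLeaf

theorem nested_logit_add_off_path_general
    (root : V) (par : V → V) (util : V → ℝ) (pathTo : V → List V)
    -- tree structure: paths go from a node up to the root via `par`
    (hroot : pathTo root = [root])
    (hpath : ∀ v, v ≠ root → pathTo v = v :: pathTo (par v))
    (C : Finset V) (x y z s : V)
    -- `s` is a node of the induced tree `T(C)`
    (hsActive : s ∈ nlActive pathTo C)
    -- `z` is attached strictly inside the subtree rooted at `s`
    (hzIn : s ∈ pathTo z)
    -- `s` is not on `x`'s path, and `y` lies outside the subtree rooted at `s`
    (hsx : s ∉ pathTo x) (hsy : s ∉ pathTo y) :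
    nlProb root par util pathTo (insert z C) x / nlProb root par util pathTo (insert z C) y
      ≥ nlProb root par util pathTo C x / nlProb root par util pathTo C y := by
  rw [nlProb_insert_of_notMem_pathTo util hroot hpath hsActive hzIn hsx,
    nlProb_insert_of_notMem_pathTo util hroot hpath hsActive hzIn hsy]

/-- If a new leaf `z` is attached strictly inside a subtree of `T(C)` rooted at a
node `s` that is not on the path of `x*` (and `y` also lies outside that
subtree), then adding `z` cannot decrease the relative choice probability of
`x*` versus `y`. -/
theorem nested_logit_add_off_path
    (root : V) (par : V → V) (util : V → ℝ) (pathTo : V → List V)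
    -- tree structure: paths go from a node up to the root via `par`
    (hroot : pathTo root = [root])
    (hpath : ∀ v, v ≠ root → pathTo v = v :: pathTo (par v))
    (C : Finset V) (x y z s : V)
    (hxC : x ∈ C) (hyC : y ∈ C) (hxy : y ≠ x) (hzC : z ∉ C)
    -- `s` is a node of the induced tree `T(C)`
    (hsActive : s ∈ nlActive pathTo C)
    -- `z` is attached strictly inside the subtree rooted at `s`
    (hzIn : s ∈ pathTo z) (hzs : z ≠ s)
    -- `s` is not on `x`'s path, and `y` lies outside the subtree rooted at `s`
    (hsx : s ∉ pathTo x) (hsy : s ∉ pathTo y) :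
    nlProb root par util pathTo (insert z C) x / nlProb root par util pathTo (insert z C) y
      ≥ nlProb root par util pathTo C x / nlProb root par util pathTo C y :=
  nested_logit_add_off_path_general root par util pathTo hroot hpath C x y z s hsActive hzIn hsx hsy
end
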